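/- Let a, b, c, x, y, z be complex numbers such that a·x + b·y + c·z = 0 and |x| = |y| = |z| = 1. Then there exists a real number d with d² = (2|a||b|)² − (|a|² + |b|² − |c|²)² such that (|a|² + |b|² − |c|² + d·i)·a·x + 2|a|²·b·y = 0. -/

import Mathlib

theorem forced_linear_relation (a b c x y z : ℂ)
    (h : a * x + b * y + c * z = 0)
    (hx : ‖x‖ = 1) (hy : ‖y‖ = 1) (hz : ‖z‖ = 1) :
    ∃ d : ℝ,
      d ^ 2 = (2 * ‖a‖ * ‖b‖) ^ 2 -
        ((‖a‖) ^ 2 + (‖b‖) ^ 2 - (‖c‖) ^ 2) ^ 2 ∧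
      (((‖a‖) ^ 2 + (‖b‖) ^ 2 - (‖c‖) ^ 2 + d * Complex.I) *
          a * x + 2 * (‖a‖) ^ 2 * b * y = 0) := by
  set u := a * x with hu
  set v := b * y with hv
  set w := (starRingEnd ℂ) u * v with hwdef
  have habsu : ‖u‖ = ‖a‖ := by
    simp [hu, map_mul, hx]
  have habsv : ‖v‖ = ‖b‖ := by
    simp [hv, map_mul, hy]
  have habsuv : ‖u + v‖ = ‖c‖ := by
    have : u + v = -(c * z) := by rw [hu, hv]; linear_combination h
    rw [this]
    simp [map_mul, hz]
  -- normSq identity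
  have hS : (‖a‖) ^ 2 + (‖b‖) ^ 2 - (‖c‖) ^ 2
      = -2 * w.re := by
    have h1 : Complex.normSq (u + v)
        = Complex.normSq u + Complex.normSq v + 2 * (u * (starRingEnd ℂ) v).re :=
      Complex.normSq_add u v
    have h2 : (u * (starRingEnd ℂ) v).re = w.re := by
      have : u * (starRingEnd ℂ) v = (starRingEnd ℂ) w := by
        simp [hwdef, mul_comm]
      rw [this, Complex.conj_re]
    rw [← habsu, ← habsv, ← habsuv, Complex.sq_norm, Complex.sq_norm, Complex.sq_norm, h1, h2]
    ring
  refine ⟨-2 * w.im, ?_, ?_⟩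
  · have hnsq : Complex.normSq w = Complex.normSq u * Complex.normSq v := by
      simp [hwdef, Complex.normSq_mul]
    have : w.re ^ 2 + w.im ^ 2 = (‖a‖) ^ 2 * (‖b‖) ^ 2 := by
      rw [← habsu, ← habsv, Complex.sq_norm, Complex.sq_norm, ← hnsq, Complex.normSq_apply]
      ring
    rw [hS]
    nlinarith [this]
  · have hco : (((‖a‖ : ℝ) : ℂ) ^ 2 + ((‖b‖ : ℝ) : ℂ) ^ 2
        - ((‖c‖ : ℝ) : ℂ) ^ 2 + ((-2 * w.im : ℝ) : ℂ) * Complex.I) = -2 * w := by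
      apply Complex.ext <;> simp [← Complex.ofReal_pow] <;> linarith [hS]
    have hcu : (starRingEnd ℂ) u * u = ((‖a‖ : ℝ) : ℂ) ^ 2 := by
      rw [mul_comm, Complex.mul_conj, ← habsu, Complex.normSq_eq_norm_sq]
      push_cast; ring
    rw [hco]
    simp only [hwdef, hu, hv]
    simp only [hu] at hcu
    linear_combination (-2 * b * y) * hcu
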